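/- arXiv:2305.12030 — 3 statements merged into one kernel-verified Lean document; each statement's English description precedes it below -/
import Mathlib

section
/- Let E be a real Hilbert space, let f : E → ℝ be differentiable with M-Lipschitz gradient (M ≥ 0), and fix u* ∈ E. Let (Ω, μ) be a probability space and U : Ω → E a measurable map such that f∘U, ‖∇f∘U‖², and ‖U − u*‖² are integrable and ∇f∘U is Bochner integrable. Suppose ‖∫(∇f∘U) dμ‖ ≤ m, ∫‖∇f(U) − ∫(∇f∘U)dμ‖² dμ ≤ v, and ∫‖U − u*‖² dμ ≤ δ². Then f(u*) − ∫ f(U) dμ ≤ (1/2)·m² + (1/2)·v + ((M+1)/2)·δ². -/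
/-!
By the descent lemma for an `M`-Lipschitz gradient and Young's inequality
`⟪∇f u, u* - u⟫ ≤ ½‖∇f u‖² + ½‖u* - u‖²`, every point satisfies
`f u* - f u ≤ ½‖∇f u‖² + ((M + 1)/2)‖u - u*‖²`. Integrating this at `u = U ω`, the second
moment `∫ ‖∇f(U)‖²` splits into the variance `∫ ‖∇f(U) - ∫ ∇f(U)‖²` plus the squared mean
`‖∫ ∇f(U)‖²`, which are bounded by `v` and `m²`.
-/

open MeasureTheory
open scoped InnerProductSpace

section Descent

variable {E : Type*} [NormedAddCommGroup E] [NormedSpace ℝ E]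

/- Along `t ↦ x + t • (y - x)`, the gap between `f` and its quadratic upper model has a
nonpositive derivative for `t ≥ 0`, so it decreases from `t = 0` to `t = 1`. -/
theorem Differentiable.le_add_fderiv_add_sq_of_norm_fderiv_sub_le {f : E → ℝ}
    (hf : Differentiable ℝ f) {M : ℝ}
    (hlip : ∀ x y, ‖fderiv ℝ f x - fderiv ℝ f y‖ ≤ M * ‖x - y‖) (x y : E) :
    f y ≤ f x + fderiv ℝ f x (y - x) + M / 2 * ‖y - x‖ ^ 2 := by
  set w := y - x
  set g : ℝ → ℝ := fun t => f (x + t • w) - t * fderiv ℝ f x w - M / 2 * t ^ 2 * ‖w‖ ^ 2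
  have hg : ∀ t, HasDerivAt g
      (fderiv ℝ f (x + t • w) w - fderiv ℝ f x w - M * t * ‖w‖ ^ 2) t := by
    intro t
    have hline : HasDerivAt (fun t : ℝ => x + t • w) w t := by
      simpa using ((hasDerivAt_id t).smul_const w).const_add x
    have := (((hf _).hasFDerivAt.comp_hasDerivAt t hline).sub
      ((hasDerivAt_id' t).mul_const (fderiv ℝ f x w))).sub
      (((hasDerivAt_pow 2 t).const_mul (M / 2)).mul_const (‖w‖ ^ 2))
    exact this.congr_deriv (by simp only [Nat.cast_ofNat, Nat.add_one_sub_one, pow_one]; ring)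
  have hg' : ∀ t ∈ interior (Set.Ici (0 : ℝ)),
      fderiv ℝ f (x + t • w) w - fderiv ℝ f x w - M * t * ‖w‖ ^ 2 ≤ 0 := by
    intro t ht
    rw [interior_Ici, Set.mem_Ioi] at ht
    have hincrement := calc fderiv ℝ f (x + t • w) w - fderiv ℝ f x w
        = (fderiv ℝ f (x + t • w) - fderiv ℝ f x) w := rfl
      _ ≤ ‖fderiv ℝ f (x + t • w) - fderiv ℝ f x‖ * ‖w‖ :=
        (le_abs_self _).trans ((fderiv ℝ f (x + t • w) - fderiv ℝ f x).le_opNorm w)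
      _ ≤ M * ‖t • w‖ * ‖w‖ := by
        gcongr
        simpa using hlip (x + t • w) x
      _ = M * t * ‖w‖ ^ 2 := by rw [norm_smul, Real.norm_of_nonneg ht.le]; ring
    linarith
  have h10 : g 1 ≤ g 0 := antitoneOn_of_hasDerivWithinAt_nonpos (convex_Ici 0)
    (fun t _ => (hg t).continuousAt.continuousWithinAt)
    (fun t _ => (hg t).hasDerivWithinAt) hg' (Set.mem_Ici.2 le_rfl) (Set.mem_Ici.2 zero_le_one)
    zero_le_one
  simp only [g, w, one_smul, add_sub_cancel, zero_smul, add_zero, one_mul, one_pow, zero_mul,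
    sub_zero, ne_eq, OfNat.ofNat_ne_zero, not_false_eq_true, zero_pow, mul_zero] at h10
  linarith

end Descent

section Gradient

variable {E : Type*} [NormedAddCommGroup E] [InnerProductSpace ℝ E] [CompleteSpace E]

theorem norm_gradient_sub_gradient (f : E → ℝ) (x y : E) :
    ‖gradient f x - gradient f y‖ = ‖fderiv ℝ f x - fderiv ℝ f y‖ := by
  rw [gradient, gradient, ← map_sub, LinearIsometryEquiv.norm_map]

theorem Differentiable.sub_le_of_norm_gradient_sub_le {f : E → ℝ} (hf : Differentiable ℝ f)
    {M : ℝ} (hlip : ∀ x y, ‖gradient f x - gradient f y‖ ≤ M * ‖x - y‖) (u z : E) :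
    f z - f u ≤ 1 / 2 * ‖gradient f u‖ ^ 2 + (M + 1) / 2 * ‖u - z‖ ^ 2 := by
  have hdescent := hf.le_add_fderiv_add_sq_of_norm_fderiv_sub_le
    (fun x y => norm_gradient_sub_gradient f x y ▸ hlip x y) u z
  have hyoung : fderiv ℝ f u (z - u) ≤ 1 / 2 * ‖gradient f u‖ ^ 2 + 1 / 2 * ‖z - u‖ ^ 2 := by
    rw [← inner_gradient_left]
    nlinarith [real_inner_le_norm (gradient f u) (z - u),
      two_mul_le_add_sq ‖gradient f u‖ ‖z - u‖]
  rw [norm_sub_rev] at hdescent hyoung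
  linarith

end Gradient

section Variance

variable {E : Type*} [NormedAddCommGroup E] [InnerProductSpace ℝ E] [CompleteSpace E]
  {Ω : Type*} [MeasurableSpace Ω] {μ : Measure Ω} [IsProbabilityMeasure μ]

theorem integral_norm_sq_eq_integral_norm_sub_integral_sq_add {X : Ω → E}
    (hX : Integrable X μ) (hX2 : Integrable (fun ω => ‖X ω‖ ^ 2) μ) :
    ∫ ω, ‖X ω‖ ^ 2 ∂μ = ∫ ω, ‖X ω - ∫ ω', X ω' ∂μ‖ ^ 2 ∂μ + ‖∫ ω, X ω ∂μ‖ ^ 2 := by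
  set c := ∫ ω, X ω ∂μ
  have hcross : ∫ ω, ⟪X ω, c⟫_ℝ ∂μ = ‖c‖ ^ 2 := by
    rw [← real_inner_self_eq_norm_sq, ← integral_inner hX c]
    exact integral_congr_ae (ae_of_all _ fun ω => real_inner_comm _ _)
  have hcross_int : Integrable (fun ω => 2 * ⟪X ω, c⟫_ℝ) μ := (hX.inner_const c).const_mul 2
  have hexpand_int : Integrable (fun ω => ‖X ω‖ ^ 2 - 2 * ⟪X ω, c⟫_ℝ) μ := hX2.sub hcross_int
  simp_rw [norm_sub_sq_real]
  rw [integral_add hexpand_int (integrable_const _), integral_sub hX2 hcross_int,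
    integral_const_mul, hcross, integral_const, probReal_univ, one_smul]
  ring

end Variance

/-- Let `f : E → ℝ` be differentiable with `M`-Lipschitz gradient on a real
Hilbert space, `u* ∈ E`, `(Ω, μ)` a probability space and `U : Ω → E` with `f ∘ U`,
`‖∇f ∘ U‖²`, `‖U − u*‖²` integrable and `∇f ∘ U` Bochner integrable. If
`‖∫ ∇f(U) dμ‖ ≤ m`, `∫ ‖∇f(U) − ∫ ∇f(U) dμ‖² dμ ≤ v`, and `∫ ‖U − u*‖² dμ ≤ δ²`, then
`f u* − ∫ f(U) dμ ≤ m²/2 + v/2 + ((M+1)/2) δ²`. -/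
theorem expected_gap_bound_max_player
    {E : Type*} [NormedAddCommGroup E] [InnerProductSpace ℝ E] [CompleteSpace E]
    {Ω : Type*} [MeasurableSpace Ω] (μ : Measure Ω) [IsProbabilityMeasure μ]
    (f : E → ℝ) (M : ℝ) (hM : 0 ≤ M)
    (hf : Differentiable ℝ f)
    (hlip : ∀ x y, ‖gradient f x - gradient f y‖ ≤ M * ‖x - y‖)
    (ustar : E) (U : Ω → E)
    (hint₁ : Integrable (fun ω => f (U ω)) μ)
    (hint₂ : Integrable (fun ω => ‖gradient f (U ω)‖ ^ 2) μ)
    (hint₃ : Integrable (fun ω => ‖U ω - ustar‖ ^ 2) μ)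
    (hint₄ : Integrable (fun ω => gradient f (U ω)) μ)
    (m v δ : ℝ)
    (hm : ‖∫ ω, gradient f (U ω) ∂μ‖ ≤ m)
    (hv : ∫ ω, ‖gradient f (U ω) - ∫ ω', gradient f (U ω') ∂μ‖ ^ 2 ∂μ ≤ v)
    (hδ : ∫ ω, ‖U ω - ustar‖ ^ 2 ∂μ ≤ δ ^ 2) :
    f ustar - ∫ ω, f (U ω) ∂μ ≤
      (1 / 2) * m ^ 2 + (1 / 2) * v + ((M + 1) / 2) * δ ^ 2 := by
  have hgap : f ustar - ∫ ω, f (U ω) ∂μ ≤ 1 / 2 * ∫ ω, ‖gradient f (U ω)‖ ^ 2 ∂μ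
      + (M + 1) / 2 * ∫ ω, ‖U ω - ustar‖ ^ 2 ∂μ := by
    calc f ustar - ∫ ω, f (U ω) ∂μ = ∫ ω, (f ustar - f (U ω)) ∂μ := by
          rw [integral_sub (integrable_const _) hint₁, integral_const, probReal_univ, one_smul]
      _ ≤ ∫ ω, (1 / 2 * ‖gradient f (U ω)‖ ^ 2 + (M + 1) / 2 * ‖U ω - ustar‖ ^ 2) ∂μ :=
          integral_mono ((integrable_const _).sub hint₁)
            ((hint₂.const_mul _).add (hint₃.const_mul _))
            fun ω => hf.sub_le_of_norm_gradient_sub_le hlip (U ω) ustar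
      _ = _ := by
          rw [integral_add (hint₂.const_mul _) (hint₃.const_mul _), integral_const_mul,
            integral_const_mul]
  have hsecond_moment := integral_norm_sq_eq_integral_norm_sub_integral_sq_add hint₄ hint₂
  have hmean_sq : ‖∫ ω, gradient f (U ω) ∂μ‖ ^ 2 ≤ m ^ 2 := pow_le_pow_left₀ (norm_nonneg _) hm 2
  have hdist : (M + 1) / 2 * ∫ ω, ‖U ω - ustar‖ ^ 2 ∂μ ≤ (M + 1) / 2 * δ ^ 2 :=
    mul_le_mul_of_nonneg_left hδ (by linarith)
  linarith
end

section
/- Let E and F be real Hilbert spaces and let f : E × F → ℝ be block-smooth with constants (M, L), with M, L ≥ 0. Fix u* ∈ E, w* ∈ F. Let (Ω, μ) be a probability space and (U, W) : Ω → E × F measurable, with all the quantities below integrable. Suppose ‖∫∇_w f(U,W) dμ‖ ≤ m_w, ∫‖∇_w f(U,W) − ∫∇_w f(U,W)dμ‖² dμ ≤ v_w, ‖∫∇_u f(U,w*) dμ‖ ≤ m_u, ∫‖∇_u f(U,w*) − ∫∇_u f(U,w*)dμ‖² dμ ≤ v_u, ∫‖W − w*‖² dμ ≤ δ_w², and ∫‖U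 − u*‖² dμ ≤ δ_u². Then f(u*,w*) − ∫ f(U,W) dμ ≤ ((L+1)/2)·δ_w² + (1/2)·m_w² + (1/2)·v_w + ((M+1)/2)·δ_u² + (1/2)·m_u² + (1/2)·v_u. -/
/-!
In each block, a function whose gradient is `C`-Lipschitz satisfies the descent lemma
`g y ≤ g x + ⟪∇g x, y - x⟫ + C/2 ‖y - x‖²`, and Young's inequality turns the linear term into
`½‖∇g x‖² + ½‖y - x‖²`. Applying this to `u ↦ f (u, w*)` between `U` and `u*` and to
`w ↦ f (U, w)` between `W` and `w*` bounds `f (u*, w*) - f (U, W)` pointwise. Integrating, the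
second moment of each gradient is its variance plus its squared mean, which gives the bound.
-/

open MeasureTheory
open scoped RealInnerProductSpace

section Smooth

variable {H : Type*} [NormedAddCommGroup H] [InnerProductSpace ℝ H] [CompleteSpace H]

theorem le_add_inner_gradient_add_sq {g : H → ℝ} {C : ℝ} {x : H} (hg : Differentiable ℝ g)
    (hC : ∀ z, ‖gradient g z - gradient g x‖ ≤ C * ‖z - x‖) (y : H) :
    g y ≤ g x + ⟪gradient g x, y - x⟫ + C / 2 * ‖y - x‖ ^ 2 := by
  set v := y - x
  let φ : ℝ → ℝ := fun t => g (x + t • v) - t * ⟪gradient g x, v⟫ - C / 2 * t ^ 2 * ‖v‖ ^ 2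
  have hφ : ∀ t,
      HasDerivAt φ (⟪gradient g (x + t • v) - gradient g x, v⟫ - C * t * ‖v‖ ^ 2) t := by
    intro t
    have hline : HasDerivAt (fun t : ℝ => x + t • v) v t := by
      simpa using ((hasDerivAt_id t).smul_const v).const_add x
    have hgline : HasDerivAt (fun t : ℝ => g (x + t • v)) ⟪gradient g (x + t • v), v⟫ t := by
      simpa [InnerProductSpace.toDual_apply_apply, Function.comp_def] using
        (hg (x + t • v)).hasGradientAt.hasFDerivAt.comp_hasDerivAt t hline
    refine ((hgline.sub ((hasDerivAt_id t).mul_const ⟪gradient g x, v⟫)).sub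
      (((hasDerivAt_pow 2 t).const_mul (C / 2)).mul_const (‖v‖ ^ 2))).congr_deriv ?_
    simp only [inner_sub_left, one_mul]
    push_cast
    ring
  have hφ' : ∀ t ∈ interior (Set.Ici (0 : ℝ)),
      ⟪gradient g (x + t • v) - gradient g x, v⟫ - C * t * ‖v‖ ^ 2 ≤ 0 := by
    intro t ht
    rw [interior_Ici] at ht
    have hlip := hC (x + t • v)
    rw [add_sub_cancel_left, norm_smul, Real.norm_of_nonneg ht.le] at hlip
    refine sub_nonpos.2 ?_
    calc ⟪gradient g (x + t • v) - gradient g x, v⟫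
        ≤ ‖gradient g (x + t • v) - gradient g x‖ * ‖v‖ := real_inner_le_norm _ _
      _ ≤ C * (t * ‖v‖) * ‖v‖ := by gcongr
      _ = C * t * ‖v‖ ^ 2 := by ring
  have hanti : AntitoneOn φ (Set.Ici 0) :=
    antitoneOn_of_hasDerivWithinAt_nonpos (convex_Ici 0)
      (fun t _ => (hφ t).continuousAt.continuousWithinAt)
      (fun t _ => (hφ t).hasDerivWithinAt) hφ'
  have h10 := hanti Set.self_mem_Ici (Set.mem_Ici.2 zero_le_one) zero_le_one
  simp only [φ, one_smul, zero_smul, add_zero, one_mul, zero_mul, one_pow, v,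
    add_sub_cancel] at h10
  linarith

theorem sub_le_half_sq_norm_gradient_add {g : H → ℝ} {C : ℝ} {x : H} (hg : Differentiable ℝ g)
    (hC : ∀ z, ‖gradient g z - gradient g x‖ ≤ C * ‖z - x‖) (y : H) :
    g y - g x ≤ 1 / 2 * ‖gradient g x‖ ^ 2 + (C + 1) / 2 * ‖y - x‖ ^ 2 := by
  have young : ⟪gradient g x, y - x⟫ ≤ 1 / 2 * ‖gradient g x‖ ^ 2 + 1 / 2 * ‖y - x‖ ^ 2 := by
    nlinarith [real_inner_le_norm (gradient g x) (y - x), two_mul_le_add_sq ‖gradient g x‖ ‖y - x‖]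
  linarith [le_add_inner_gradient_add_sq hg hC y]

end Smooth

theorem sub_le_of_block_gradient_lipschitz {E F : Type*}
    [NormedAddCommGroup E] [InnerProductSpace ℝ E] [CompleteSpace E]
    [NormedAddCommGroup F] [InnerProductSpace ℝ F] [CompleteSpace F]
    {f : E × F → ℝ} {M L : ℝ} {u u' : E} {w w' : F}
    (hdu : Differentiable ℝ (fun x => f (x, w'))) (hdw : Differentiable ℝ (fun y => f (u, y)))
    (hMu : ∀ x, ‖gradient (fun x => f (x, w')) x - gradient (fun x => f (x, w')) u‖ ≤ M * ‖x - u‖)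
    (hLw : ∀ y, ‖gradient (fun y => f (u, y)) y - gradient (fun y => f (u, y)) w‖ ≤ L * ‖y - w‖) :
    f (u', w') - f (u, w) ≤
      (1 / 2 * ‖gradient (fun x => f (x, w')) u‖ ^ 2 + (M + 1) / 2 * ‖u - u'‖ ^ 2)
        + (1 / 2 * ‖gradient (fun y => f (u, y)) w‖ ^ 2 + (L + 1) / 2 * ‖w - w'‖ ^ 2) := by
  have hu := sub_le_half_sq_norm_gradient_add hdu hMu u'
  have hw := sub_le_half_sq_norm_gradient_add hdw hLw w'
  rw [norm_sub_rev] at hu hw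
  linarith

theorem norm_sq_eq_norm_sub_sq_add {H : Type*} [NormedAddCommGroup H] [InnerProductSpace ℝ H]
    (a m : H) : ‖a‖ ^ 2 = ‖a - m‖ ^ 2 + 2 * ⟪m, a - m⟫ + ‖m‖ ^ 2 := by
  rw [real_inner_comm, ← norm_add_sq_real, sub_add_cancel]

section SecondMoment

variable {H : Type*} [NormedAddCommGroup H] [InnerProductSpace ℝ H]
  {Ω : Type*} [MeasurableSpace Ω] {μ : Measure Ω} [IsProbabilityMeasure μ] {g : Ω → H}

theorem integrable_norm_sq_of_integrable_norm_sub_integral_sq (hg : Integrable g μ)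
    (hg2 : Integrable (fun ω => ‖g ω - ∫ ω', g ω' ∂μ‖ ^ 2) μ) :
    Integrable (fun ω => ‖g ω‖ ^ 2) μ := by
  rw [funext fun ω => norm_sq_eq_norm_sub_sq_add (g ω) (∫ ω', g ω' ∂μ)]
  exact (hg2.add (((hg.sub (integrable_const _)).const_inner _).const_mul 2)).add
    (integrable_const _)

theorem integral_norm_sq_eq_integral_norm_sub_integral_sq_add_s6 [CompleteSpace H]
    (hg : Integrable g μ)
    (hg2 : Integrable (fun ω => ‖g ω - ∫ ω', g ω' ∂μ‖ ^ 2) μ) :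
    ∫ ω, ‖g ω‖ ^ 2 ∂μ = ∫ ω, ‖g ω - ∫ ω', g ω' ∂μ‖ ^ 2 ∂μ + ‖∫ ω, g ω ∂μ‖ ^ 2 := by
  set m := ∫ ω, g ω ∂μ
  have hcentred : Integrable (fun ω => g ω - m) μ := hg.sub (integrable_const m)
  have hcross : ∫ ω, ⟪m, g ω - m⟫ ∂μ = 0 := by
    rw [integral_inner hcentred, integral_sub hg (integrable_const m)]
    simp [m]
  rw [funext fun ω => norm_sq_eq_norm_sub_sq_add (g ω) m,
    integral_add (f := fun ω => ‖g ω - m‖ ^ 2 + 2 * ⟪m, g ω - m⟫)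
      (hg2.add ((hcentred.const_inner m).const_mul 2)) (integrable_const _),
    integral_add hg2 ((hcentred.const_inner m).const_mul 2), integral_const_mul, hcross]
  simp

theorem integral_norm_sq_le [CompleteSpace H] (hg : Integrable g μ)
    (hg2 : Integrable (fun ω => ‖g ω - ∫ ω', g ω' ∂μ‖ ^ 2) μ) {m v : ℝ}
    (hm : ‖∫ ω, g ω ∂μ‖ ≤ m) (hv : ∫ ω, ‖g ω - ∫ ω', g ω' ∂μ‖ ^ 2 ∂μ ≤ v) :
    ∫ ω, ‖g ω‖ ^ 2 ∂μ ≤ v + m ^ 2 := by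
  rw [integral_norm_sq_eq_integral_norm_sub_integral_sq_add_s6 hg hg2]
  gcongr

end SecondMoment

/-- Let `f : E × F → ℝ` be block-smooth with constants `(M, L)` on real
Hilbert spaces, `u* ∈ E`, `w* ∈ F`, `(Ω, μ)` a probability space and `(U, W) : Ω → E × F`
with the relevant quantities integrable. If `‖∫ ∇_w f(U,W) dμ‖ ≤ m_w`,
`∫ ‖∇_w f(U,W) − ∫ ∇_w f(U,W) dμ‖² dμ ≤ v_w`, `‖∫ ∇_u f(U,w*) dμ‖ ≤ m_u`,
`∫ ‖∇_u f(U,w*) − ∫ ∇_u f(U,w*) dμ‖² dμ ≤ v_u`, `∫ ‖W − w*‖² dμ ≤ δ_w²` and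
`∫ ‖U − u*‖² dμ ≤ δ_u²`, then
`f(u*,w*) − ∫ f(U,W) dμ ≤ ((L+1)/2) δ_w² + m_w²/2 + v_w/2 + ((M+1)/2) δ_u² + m_u²/2 + v_u/2`. -/
theorem expected_gap_bound_pair
    {E F : Type*}
    [NormedAddCommGroup E] [InnerProductSpace ℝ E] [CompleteSpace E]
    [NormedAddCommGroup F] [InnerProductSpace ℝ F] [CompleteSpace F]
    {Ω : Type*} [MeasurableSpace Ω] (μ : Measure Ω) [IsProbabilityMeasure μ]
    (f : E × F → ℝ) (M L : ℝ) (hM : 0 ≤ M) (hL : 0 ≤ L)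
    (hdu : ∀ w : F, Differentiable ℝ (fun x : E => f (x, w)))
    (hdw : ∀ u : E, Differentiable ℝ (fun y : F => f (u, y)))
    (hMu : ∀ (w : F) (u u' : E),
      ‖gradient (fun x : E => f (x, w)) u - gradient (fun x : E => f (x, w)) u'‖ ≤ M * ‖u - u'‖)
    (hLw : ∀ (u : E) (w w' : F),
      ‖gradient (fun y : F => f (u, y)) w - gradient (fun y : F => f (u, y)) w'‖ ≤ L * ‖w - w'‖)
    (ustar : E) (wstar : F) (U : Ω → E) (W : Ω → F)
    (hint₁ : Integrable (fun ω => f (U ω, W ω)) μ)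
    (hint₂ : Integrable (fun ω => gradient (fun y : F => f (U ω, y)) (W ω)) μ)
    (hint₃ : Integrable (fun ω =>
      ‖gradient (fun y : F => f (U ω, y)) (W ω)
        - ∫ ω', gradient (fun y : F => f (U ω', y)) (W ω') ∂μ‖ ^ 2) μ)
    (hint₄ : Integrable (fun ω => gradient (fun x : E => f (x, wstar)) (U ω)) μ)
    (hint₅ : Integrable (fun ω =>
      ‖gradient (fun x : E => f (x, wstar)) (U ω)
        - ∫ ω', gradient (fun x : E => f (x, wstar)) (U ω') ∂μ‖ ^ 2) μ)
    (hint₆ : Integrable (fun ω => ‖W ω - wstar‖ ^ 2) μ)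
    (hint₇ : Integrable (fun ω => ‖U ω - ustar‖ ^ 2) μ)
    (mw vw mu vu δw δu : ℝ)
    (hmw : ‖∫ ω, gradient (fun y : F => f (U ω, y)) (W ω) ∂μ‖ ≤ mw)
    (hvw : ∫ ω, ‖gradient (fun y : F => f (U ω, y)) (W ω)
        - ∫ ω', gradient (fun y : F => f (U ω', y)) (W ω') ∂μ‖ ^ 2 ∂μ ≤ vw)
    (hmu : ‖∫ ω, gradient (fun x : E => f (x, wstar)) (U ω) ∂μ‖ ≤ mu)
    (hvu : ∫ ω, ‖gradient (fun x : E => f (x, wstar)) (U ω)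
        - ∫ ω', gradient (fun x : E => f (x, wstar)) (U ω') ∂μ‖ ^ 2 ∂μ ≤ vu)
    (hδw : ∫ ω, ‖W ω - wstar‖ ^ 2 ∂μ ≤ δw ^ 2)
    (hδu : ∫ ω, ‖U ω - ustar‖ ^ 2 ∂μ ≤ δu ^ 2) :
    f (ustar, wstar) - ∫ ω, f (U ω, W ω) ∂μ ≤
      ((L + 1) / 2) * δw ^ 2 + (1 / 2) * mw ^ 2 + (1 / 2) * vw
        + ((M + 1) / 2) * δu ^ 2 + (1 / 2) * mu ^ 2 + (1 / 2) * vu := by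
  set gu : Ω → E := fun ω => gradient (fun x : E => f (x, wstar)) (U ω)
  set gw : Ω → F := fun ω => gradient (fun y : F => f (U ω, y)) (W ω)
  have hgu := integrable_norm_sq_of_integrable_norm_sub_integral_sq hint₄ hint₅
  have hgw := integrable_norm_sq_of_integrable_norm_sub_integral_sq hint₂ hint₃
  have hbu : Integrable (fun ω => 1 / 2 * ‖gu ω‖ ^ 2 + (M + 1) / 2 * ‖U ω - ustar‖ ^ 2) μ :=
    (hgu.const_mul _).add (hint₇.const_mul _)
  have hbw : Integrable (fun ω => 1 / 2 * ‖gw ω‖ ^ 2 + (L + 1) / 2 * ‖W ω - wstar‖ ^ 2) μ :=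
    (hgw.const_mul _).add (hint₆.const_mul _)
  have hpointwise : ∀ ω, f (ustar, wstar) - f (U ω, W ω) ≤
      (1 / 2 * ‖gu ω‖ ^ 2 + (M + 1) / 2 * ‖U ω - ustar‖ ^ 2)
        + (1 / 2 * ‖gw ω‖ ^ 2 + (L + 1) / 2 * ‖W ω - wstar‖ ^ 2) := fun ω =>
    sub_le_of_block_gradient_lipschitz (hdu wstar) (hdw (U ω))
      (fun x => hMu wstar x (U ω)) (fun y => hLw (U ω) y (W ω))
  calc f (ustar, wstar) - ∫ ω, f (U ω, W ω) ∂μ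
      = ∫ ω, (f (ustar, wstar) - f (U ω, W ω)) ∂μ := by
        rw [integral_sub (integrable_const _) hint₁, integral_const]; simp
    _ ≤ ∫ ω, ((1 / 2 * ‖gu ω‖ ^ 2 + (M + 1) / 2 * ‖U ω - ustar‖ ^ 2)
          + (1 / 2 * ‖gw ω‖ ^ 2 + (L + 1) / 2 * ‖W ω - wstar‖ ^ 2)) ∂μ :=
        integral_mono ((integrable_const _).sub hint₁) (hbu.add hbw) hpointwise
    _ = 1 / 2 * ∫ ω, ‖gu ω‖ ^ 2 ∂μ + (M + 1) / 2 * ∫ ω, ‖U ω - ustar‖ ^ 2 ∂μ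
          + (1 / 2 * ∫ ω, ‖gw ω‖ ^ 2 ∂μ + (L + 1) / 2 * ∫ ω, ‖W ω - wstar‖ ^ 2 ∂μ) := by
        rw [integral_add hbu hbw, integral_add (hgu.const_mul _) (hint₇.const_mul _),
          integral_add (hgw.const_mul _) (hint₆.const_mul _)]
        simp only [integral_const_mul]
    _ ≤ 1 / 2 * (vu + mu ^ 2) + (M + 1) / 2 * δu ^ 2
          + (1 / 2 * (vw + mw ^ 2) + (L + 1) / 2 * δw ^ 2) := by
        gcongr
        exacts [integral_norm_sq_le hint₄ hint₅ hmu hvu, integral_norm_sq_le hint₂ hint₃ hmw hvw]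
    _ = _ := by ring
end

section
/- Let E be a real Hilbert space and let f : E → ℝ be differentiable with M-Lipschitz gradient, M ≥ 0. Let ζ ≥ 1 be a natural number and α > 0 satisfy 2·α·√ζ > M·α². Define iterates u : ℕ → E by gradient ascent with constant step size α/√ζ: u(i+1) = u(i) + (α/√ζ)·∇f(u(i)). Then min_{i<ζ} ‖∇f(u(i))‖² ≤ 2·(f(u(ζ)) − f(u(0))) / (2·α·√ζ − M·α²). -/
/-!
Along the segment `t ↦ x + t • v`, the Lipschitz bound on the derivative gives the quadratic
Taylor estimate `|f (x + v) - f x - ⟪∇f x, v⟫| ≤ M/2 ‖v‖²`. Applied to an ascent step of length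
`η = α/√ζ`, it shows that each step raises `f` by at least `(η - M η²/2) ‖∇f‖²`; summing the `ζ`
steps, the increase of `f` dominates `ζ (η - M η²/2) = (2α√ζ - Mα²)/2` times the smallest
squared gradient norm.
-/

open InnerProductSpace Finset

theorem norm_sub_sub_fderiv_le_of_lipschitz {E F : Type*} [NormedAddCommGroup E]
    [NormedSpace ℝ E] [NormedAddCommGroup F] [NormedSpace ℝ F] {f : E → F}
    {f' : E → E →L[ℝ] F} {M : ℝ} (hf : ∀ x, HasFDerivAt f (f' x) x)
    (hlip : ∀ x y, ‖f' x - f' y‖ ≤ M * ‖x - y‖) (x v : E) :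
    ‖f (x + v) - f x - f' x v‖ ≤ M / 2 * ‖v‖ ^ 2 := by
  set φ : ℝ → F := fun t => f (x + t • v) - f x - t • f' x v
  have hφ : ∀ t, HasDerivAt φ (f' (x + t • v) v - f' x v) t := by
    intro t
    have hline : HasDerivAt (fun t : ℝ => x + t • v) v t := by
      simpa using ((hasDerivAt_id t).smul_const v).const_add x
    simpa using (((hf _).comp_hasDerivAt t hline).sub_const (f x)).fun_sub
      ((hasDerivAt_id t).smul_const (f' x v))
  have hB : ∀ t, HasDerivAt (fun t : ℝ => M / 2 * ‖v‖ ^ 2 * t ^ 2) (M * ‖v‖ ^ 2 * t) t :=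
    fun t => ((hasDerivAt_pow 2 t).const_mul _).congr_deriv (by push_cast; ring)
  have hbound : ∀ t ∈ Set.Ico (0 : ℝ) 1, ‖f' (x + t • v) v - f' x v‖ ≤ M * ‖v‖ ^ 2 * t := by
    intro t ht
    calc ‖f' (x + t • v) v - f' x v‖ = ‖(f' (x + t • v) - f' x) v‖ := rfl
      _ ≤ ‖f' (x + t • v) - f' x‖ * ‖v‖ := ContinuousLinearMap.le_opNorm _ _
      _ ≤ M * ‖t • v‖ * ‖v‖ := by gcongr; simpa using hlip (x + t • v) x
      _ = M * ‖v‖ ^ 2 * t := by rw [norm_smul, Real.norm_of_nonneg ht.1]; ring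
  simpa [φ] using image_norm_le_of_norm_deriv_right_le_deriv_boundary
    (fun t _ => (hφ t).continuousAt.continuousWithinAt) (fun t _ => (hφ t).hasDerivWithinAt)
    (by simp [φ]) hB hbound (Set.right_mem_Icc.2 zero_le_one)

section Gradient

variable {E : Type*} [NormedAddCommGroup E] [InnerProductSpace ℝ E] [CompleteSpace E]
  {f : E → ℝ} {M : ℝ}

theorem le_apply_add_of_lipschitz_gradient (hf : Differentiable ℝ f)
    (hlip : ∀ x y, ‖gradient f x - gradient f y‖ ≤ M * ‖x - y‖) (x v : E) :
    f x + ⟪gradient f x, v⟫_ℝ - M / 2 * ‖v‖ ^ 2 ≤ f (x + v) := by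
  have h := norm_sub_sub_fderiv_le_of_lipschitz (f' := fun y => toDual ℝ E (gradient f y))
    (fun y => (hf y).hasGradientAt.hasFDerivAt)
    (fun y z => by rw [← map_sub, LinearIsometryEquiv.norm_map]; exact hlip y z) x v
  rw [toDual_apply_apply, Real.norm_eq_abs] at h
  linarith [neg_abs_le (f (x + v) - f x - ⟪gradient f x, v⟫_ℝ)]

theorem mul_norm_gradient_sq_le_apply_add_smul_gradient_sub (hf : Differentiable ℝ f)
    (hlip : ∀ x y, ‖gradient f x - gradient f y‖ ≤ M * ‖x - y‖) (x : E) (η : ℝ) :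
    (η - M / 2 * η ^ 2) * ‖gradient f x‖ ^ 2 ≤ f (x + η • gradient f x) - f x := by
  have h := le_apply_add_of_lipschitz_gradient hf hlip x (η • gradient f x)
  rw [real_inner_smul_right, real_inner_self_eq_norm_sq, norm_smul, mul_pow, Real.norm_eq_abs,
    sq_abs] at h
  linarith

end Gradient

theorem natCast_mul_mul_inf'_le_sub {a g : ℕ → ℝ} {c : ℝ} {n : ℕ} (hn : (range n).Nonempty)
    (hc : 0 ≤ c) (h : ∀ i, c * g i ≤ a (i + 1) - a i) :
    n * c * (range n).inf' hn g ≤ a n - a 0 := by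
  calc n * c * (range n).inf' hn g = ∑ _i ∈ range n, c * (range n).inf' hn g := by
        rw [sum_const, card_range, nsmul_eq_mul, mul_assoc]
    _ ≤ ∑ i ∈ range n, (a (i + 1) - a i) :=
        sum_le_sum fun i hi => (mul_le_mul_of_nonneg_left (inf'_le g hi) hc).trans (h i)
    _ = a n - a 0 := sum_range_sub a n

/-- Let `f : E → ℝ` be differentiable with `M`-Lipschitz gradient on a real
Hilbert space, `ζ ≥ 1`, `α > 0` with `2 α √ζ > M α²`, and let `u` be gradient-ascent iterates
with constant step size `α/√ζ`: `u (i+1) = u i + (α/√ζ) • ∇f (u i)`. Then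
`min_{i<ζ} ‖∇f (u i)‖² ≤ 2 (f (u ζ) − f (u 0)) / (2 α √ζ − M α²)`. -/
theorem gradient_ascent_min_grad_bound
    {E : Type*} [NormedAddCommGroup E] [InnerProductSpace ℝ E] [CompleteSpace E]
    (f : E → ℝ) (M : ℝ)
    (hf : Differentiable ℝ f)
    (hlip : ∀ x y, ‖gradient f x - gradient f y‖ ≤ M * ‖x - y‖)
    (ζ : ℕ) (hζ : 1 ≤ ζ) (α : ℝ)
    (hstep : M * α ^ 2 < 2 * α * Real.sqrt ζ)
    (u : ℕ → E)
    (hu : ∀ i, u (i + 1) = u i + (α / Real.sqrt ζ) • gradient f (u i)) :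
    (Finset.range ζ).inf' (Finset.nonempty_range_iff.mpr (by omega))
        (fun i => ‖gradient f (u i)‖ ^ 2) ≤
      2 * (f (u ζ) - f (u 0)) / (2 * α * Real.sqrt ζ - M * α ^ 2) := by
  have hζ' : (0 : ℝ) < ζ := by exact_mod_cast hζ
  have hweight : ζ * (α / Real.sqrt ζ - M / 2 * (α / Real.sqrt ζ) ^ 2)
      = (2 * α * Real.sqrt ζ - M * α ^ 2) / 2 := by
    have hsqrt : Real.sqrt ζ ≠ 0 := (Real.sqrt_pos.2 hζ').ne'
    field_simp
    rw [Real.sq_sqrt hζ'.le]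
    ring
  set η := α / Real.sqrt ζ
  have hgain : ∀ i, (η - M / 2 * η ^ 2) * ‖gradient f (u i)‖ ^ 2 ≤ f (u (i + 1)) - f (u i) :=
    fun i => hu i ▸ mul_norm_gradient_sq_le_apply_add_smul_gradient_sub hf hlip (u i) η
  have hc : 0 ≤ η - M / 2 * η ^ 2 :=
    (pos_of_mul_pos_right (by linarith) hζ'.le).le
  have htotal := natCast_mul_mul_inf'_le_sub (a := fun i => f (u i))
    (nonempty_range_iff.mpr (Nat.one_le_iff_ne_zero.mp hζ)) hc hgain
  rw [hweight] at htotal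
  rw [le_div_iff₀ (by linarith)]
  linarith
end
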